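/- Let W be a finite tree on at least 2 vertices and let w be a vertex of W. Then the graph W^3 − w (the cube of W with vertex w deleted) has a Hamiltonian path whose endpoints w1 and w2 satisfy d_W(w, w1) = 1 and d_W(w, w2) ≤ 2. -/

import Mathlib

def SimpleGraph.power {V : Type*} (G : SimpleGraph V) (n : ℕ) : SimpleGraph V where
  Adj v w := 1 ≤ G.dist v w ∧ G.dist v w ≤ n
  symm := ⟨fun v w h => by
    have h' : 1 ≤ G.dist v w ∧ G.dist v w ≤ n := h
    show 1 ≤ G.dist w v ∧ G.dist w v ≤ n
    rwa [SimpleGraph.dist_comm]⟩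
  loopless := ⟨fun v h => by simp [SimpleGraph.dist_self] at h⟩

/-- A graph is Hamilton-connected if every pair of distinct vertices is joined
by a Hamiltonian path. -/
def SimpleGraph.IsHamiltonConnected {V : Type*} [DecidableEq V] (G : SimpleGraph V) : Prop :=
  ∀ v w : V, v ≠ w → ∃ p : G.Walk v w, p.IsHamiltonian

/-- A graph is `k`-ordered if every sequence of `k` distinct vertices lies on a cycle
in the given cyclic order. -/
def SimpleGraph.IsKOrdered {V : Type*} (G : SimpleGraph V) (k : ℕ) : Prop :=
  ∀ v : Fin k → V, Function.Injective v →
    ∃ (a : V) (c : G.Walk a a), c.IsCycle ∧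
      ∃ t : Fin k → ℕ, StrictMono t ∧ (∀ i, t i < c.length) ∧ ∀ i, c.getVert (t i) = v i

/-- A graph is `k`-ordered Hamiltonian if every sequence of `k` distinct vertices lies on a
Hamiltonian cycle in the given cyclic order. -/
def SimpleGraph.IsKOrderedHamiltonian {V : Type*} [DecidableEq V] (G : SimpleGraph V) (k : ℕ) :
    Prop :=
  ∀ v : Fin k → V, Function.Injective v →
    ∃ (a : V) (c : G.Walk a a), c.IsHamiltonianCycle ∧
      ∃ t : Fin k → ℕ, StrictMono t ∧ (∀ i, t i < c.length) ∧ ∀ i, c.getVert (t i) = v i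


set_option linter.unusedSectionVars false
set_option maxHeartbeats 1000000

namespace TreeCube
open SimpleGraph Walk

variable {V : Type*} [DecidableEq V] {W : SimpleGraph V}


abbrev R (W : SimpleGraph V) (a b : V) : Prop := a ≠ b ∧ W.dist a b ≤ 3

def Good (W : SimpleGraph V) (S : Set V) : Prop :=
  ∀ ⦃a b : V⦄, a ∈ S → b ∈ S → ∀ p : W.Walk a b, p.IsPath → ∀ z ∈ p.support, z ∈ S

def H (W : SimpleGraph V) (u v : V) : Set V := {x | W.dist x u < W.dist x v}

lemma mem_H {u v x : V} : x ∈ H W u v ↔ W.dist x u < W.dist x v := Iff.rfl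

lemma Good.inter {S T : Set V} (hS : Good W S) (hT : Good W T) : Good W (S ∩ T) :=
  fun _ _ ha hb p hp z hz => ⟨hS ha.1 hb.1 p hp z hz, hT ha.2 hb.2 p hp z hz⟩

lemma R_symm {a b : V} (h : R W a b) : R W b a := ⟨h.1.symm, by rw [SimpleGraph.dist_comm]; exact h.2⟩

noncomputable def thePath (hW : W.Connected) (a b : V) : W.Walk a b :=
  (hW.preconnected a b).some.bypass

lemma thePath_isPath (hW : W.Connected) (a b : V) : (thePath hW a b).IsPath :=
  Walk.bypass_isPath _

lemma path_eq (hW : W.IsTree) {a b : V} {p q : W.Walk a b} (hp : p.IsPath) (hq : q.IsPath) :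
    p = q :=
  congrArg Subtype.val (hW.2.path_unique ⟨p, hp⟩ ⟨q, hq⟩)

lemma length_eq_dist (hW : W.IsTree) {a b : V} (p : W.Walk a b) (hp : p.IsPath) :
    p.length = W.dist a b := by
  obtain ⟨q, hq⟩ := hW.isConnected.exists_walk_length_eq_dist a b
  have h1 : p = q.bypass := path_eq hW hp q.bypass_isPath
  have h2 := q.length_bypass_le
  have h3 := SimpleGraph.dist_le p
  have h4 := congrArg Walk.length h1
  omega

lemma dist_add_of_mem (hW : W.IsTree) {a b z : V} {p : W.Walk a b} (hp : p.IsPath)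
    (hz : z ∈ p.support) : W.dist a b = W.dist a z + W.dist z b := by
  rw [← length_eq_dist hW p hp, ← length_eq_dist hW _ (hp.takeUntil hz),
    ← length_eq_dist hW _ (hp.dropUntil hz)]
  have := congrArg Walk.length (p.take_spec hz)
  rw [Walk.length_append] at this
  omega

lemma path_concat (hW : W.IsTree) {u v x : V} (huv : W.Adj u v) (hx : W.dist x u < W.dist x v)
    {p : W.Walk x u} (hp : p.IsPath) : v ∉ p.support ∧ (p.concat huv).IsPath := by
  have hvu : W.dist v u = 1 := SimpleGraph.dist_eq_one_iff_adj.mpr huv.symm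
  have hv : v ∉ p.support := fun h => by
    have := dist_add_of_mem hW hp h
    omega
  refine ⟨hv, Walk.IsPath.mk' ?_⟩
  rw [Walk.support_concat]
  simp [List.concat_eq_append, List.nodup_append, hp.support_nodup, hv, ]
  exact fun a ha hav => hv (hav ▸ ha)

lemma dist_adj (hW : W.IsTree) {u v : V} (huv : W.Adj u v) (x : V) :
    W.dist x v = W.dist x u + 1 ∨ W.dist x u = W.dist x v + 1 := by
  have hvu : W.dist v u = 1 := SimpleGraph.dist_eq_one_iff_adj.mpr huv.symm
  set p := thePath hW.isConnected x u with hpdef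
  have hp : p.IsPath := thePath_isPath _ _ _
  by_cases h : v ∈ p.support
  · right
    rw [dist_add_of_mem hW hp h]
    omega
  · left
    by_cases hlt : W.dist x u < W.dist x v
    · obtain ⟨-, hq⟩ := path_concat hW huv hlt hp
      have := length_eq_dist hW _ hq
      rw [Walk.length_concat, length_eq_dist hW p hp] at this
      omega
    · -- dist x v ≤ dist x u; show the concat is still a path and get ≤, combined with ≥
      have hq : (p.concat huv).IsPath := by
        refine Walk.IsPath.mk' ?_
        rw [Walk.support_concat]
        simp [List.concat_eq_append, List.nodup_append, hp.support_nodup, h, ]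
        exact fun a ha hav => h (hav ▸ ha)
      have := length_eq_dist hW _ hq
      rw [Walk.length_concat, length_eq_dist hW p hp] at this
      omega


lemma support_head? {a b : V} (p : W.Walk a b) : p.support.head? = some a := by
  cases p <;> simp

lemma support_getLast? {a b : V} (p : W.Walk a b) : p.support.getLast? = some b := by
  rw [← List.head?_reverse, ← Walk.support_reverse]
  exact support_head? _

lemma H_cover (hW : W.IsTree) {u v : V} (huv : W.Adj u v) (x : V) :
    x ∈ H W u v ∨ x ∈ H W v u := by
  rcases dist_adj hW huv x with h | h <;> simp only [mem_H] <;> omega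

lemma H_disj {u v x : V} (h1 : x ∈ H W u v) (h2 : x ∈ H W v u) : False := by
  simp only [mem_H] at h1 h2; omega

/-- the unique path from a member of `H u v` to `v` is the path to `u` plus the edge. -/
lemma path_to_v (hW : W.IsTree) {u v a : V} (huv : W.Adj u v) (ha : a ∈ H W u v) :
    (thePath hW.isConnected a v) = (thePath hW.isConnected a u).concat huv := by
  obtain ⟨-, hq⟩ := path_concat hW huv ha (thePath_isPath hW.isConnected a u)
  exact path_eq hW (thePath_isPath _ _ _) hq

lemma H_mem_of_on_path (hW : W.IsTree) {u v a z : V} (huv : W.Adj u v) (ha : a ∈ H W u v)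
    (hz : z ∈ (thePath hW.isConnected a v).support) (hzv : z ≠ v) : z ∈ H W u v := by
  rw [path_to_v hW huv ha, Walk.support_concat, List.mem_append] at hz
  have hz' : z ∈ (thePath hW.isConnected a u).support := by
    rcases hz with h | h
    · exact h
    · simp at h; exact absurd h hzv
  have h1 := dist_add_of_mem hW (thePath_isPath hW.isConnected a u) hz'
  by_contra hcon
  simp only [mem_H, not_lt] at hcon
  have h2 := hW.isConnected.dist_triangle (u := a) (v := z) (w := v)
  simp only [mem_H] at ha
  omega

lemma H_good (hW : W.IsTree) {u v : V} (huv : W.Adj u v) : Good W (H W u v) := by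
  intro a b ha hb p hp z hz
  -- z is on the union of the two paths to v
  have hzr : z ∈ (thePath hW.isConnected a v).support ∨
      z ∈ (thePath hW.isConnected b v).support := by
    set r : W.Walk a b :=
      (thePath hW.isConnected a v).append (thePath hW.isConnected b v).reverse with hr
    have : p = r.bypass := path_eq hW hp r.bypass_isPath
    have hz' : z ∈ r.support := r.support_bypass_subset (this ▸ hz)
    rw [hr, Walk.mem_support_append_iff] at hz'
    rcases hz' with h | h
    · exact Or.inl h
    · right; rwa [Walk.support_reverse, List.mem_reverse] at h
  have hzv : z ≠ v := by
    rintro rfl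
    have h1 := dist_add_of_mem hW hp hz
    have h2 := hW.isConnected.dist_triangle (u := a) (v := u) (w := b)
    simp only [mem_H] at ha hb
    have hav : W.dist a z = W.dist a u + 1 := by
      rcases dist_adj hW huv a with h | h <;> omega
    have hbv : W.dist b z = W.dist b u + 1 := by
      rcases dist_adj hW huv b with h | h <;> omega
    have hc1 : W.dist z b = W.dist b z := SimpleGraph.dist_comm
    have hc2 : W.dist u b = W.dist b u := SimpleGraph.dist_comm
    omega
  rcases hzr with h | h
  · exact H_mem_of_on_path hW huv ha h hzv
  · exact H_mem_of_on_path hW huv hb h hzv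

lemma component_unique (hW : W.IsTree) {w u₁ u₂ x : V} (h1 : W.Adj w u₁) (h2 : W.Adj w u₂)
    (hx1 : x ∈ H W u₁ w) (hx2 : x ∈ H W u₂ w) : u₁ = u₂ := by
  have e1 := path_to_v hW h1.symm hx1
  have e2 := path_to_v hW h2.symm hx2
  have e3 : (thePath hW.isConnected x u₁).concat h1.symm
      = (thePath hW.isConnected x u₂).concat h2.symm := by rw [← e1, ← e2]
  have e4 := congrArg Walk.support e3
  rw [Walk.support_concat, Walk.support_concat] at e4
  have e5 : (thePath hW.isConnected x u₁).support = (thePath hW.isConnected x u₂).support := by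
    have := congrArg List.dropLast e4
    simpa [List.concat_eq_append] using this
  have g1 := support_getLast? (thePath hW.isConnected x u₁)
  have g2 := support_getLast? (thePath hW.isConnected x u₂)
  rw [e5] at g1
  rw [g1] at g2
  exact Option.some_injective _ g2

lemma exists_component (hW : W.IsTree) {w x : V} (hx : x ≠ w) :
    ∃ u, W.Adj w u ∧ x ∈ H W u w := by
  obtain ⟨p, hp⟩ : ∃ p : W.Walk w x, p.IsPath := ⟨thePath hW.isConnected w x, thePath_isPath _ _ _⟩
  cases p with
  | nil => exact absurd rfl hx
  | @cons _ u _ h q =>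
    refine ⟨u, h, ?_⟩
    have hu : u ∈ (Walk.cons h q).reverse.support := by
      rw [Walk.support_reverse, List.mem_reverse]
      simp [q.start_mem_support]
    have := dist_add_of_mem hW hp.reverse hu
    have hd : W.dist u w = 1 := SimpleGraph.dist_eq_one_iff_adj.mpr h.symm
    rw [mem_H]
    omega

lemma exists_adj_mem (hW : W.IsTree) {S : Set V} (hS : Good W S) {u x : V} (hu : u ∈ S)
    (hx : x ∈ S) (hne : x ≠ u) : ∃ u', W.Adj u u' ∧ u' ∈ S := by
  obtain ⟨p, hp⟩ : ∃ p : W.Walk u x, p.IsPath := ⟨thePath hW.isConnected u x, thePath_isPath _ _ _⟩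
  cases p with
  | nil => exact absurd rfl hne
  | @cons _ u' _ h q =>
    exact ⟨u', h, hS hu hx _ hp u' (by simp [q.start_mem_support])⟩

lemma mem_of_head? {α : Type*} {l : List α} {a : α} (h : l.head? = some a) : a ∈ l := by
  cases l <;> simp_all

lemma ne_nil_of_head? {α : Type*} {l : List α} {a : α} (h : l.head? = some a) : l ≠ [] := by
  cases l <;> simp_all

def Spec (W : SimpleGraph V) (S : Set V) (u v : V) (l : List V) : Prop :=
  l.Nodup ∧ (∀ x, x ∈ l ↔ x ∈ S) ∧ l.Chain' (R W) ∧ l.head? = some u ∧ l.getLast? = some v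

lemma rooted_aux (hW : W.IsTree) {S : Set V} (hS : Good W S) {u : V} (hu : u ∈ S)
    (hB : ∀ v', v' ∈ S → W.Adj u v' → ∃ l, Spec W S u v' l) :
    ∃ l e, Spec W S u e l ∧ W.dist u e ≤ 1 := by
  by_cases hsing : ∀ x ∈ S, x = u
  · refine ⟨[u], u, ⟨by simp, fun x => ⟨?_, ?_⟩, List.isChain_singleton _, rfl, rfl⟩, by rw [SimpleGraph.dist_self]; exact zero_le_one⟩
    · intro hx; simp at hx; rwa [hx]
    · intro hx; simp [hsing x hx]
  · push_neg at hsing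
    obtain ⟨x, hx, hxu⟩ := hsing
    obtain ⟨u', huu', hu'S⟩ := exists_adj_mem hW hS hu hx hxu
    obtain ⟨l, hl⟩ := hB u' hu'S huu'
    exact ⟨l, u', hl, le_of_eq (SimpleGraph.dist_eq_one_iff_adj.mpr huu')⟩

lemma hamlist_edge (hW : W.IsTree) [Fintype V] :
    ∀ n : ℕ, ∀ S : Set V, S.ncard ≤ n → Good W S →
    ∀ u v, u ∈ S → v ∈ S → W.Adj u v → ∃ l, Spec W S u v l := by
  intro n
  induction n using Nat.strong_induction_on with
  | _ n IH =>
  intro S hn hS u v hu hv huv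
  have hfin : S.Finite := S.toFinite
  set Su := S ∩ H W u v with hSudef
  set Sv := S ∩ H W v u with hSvdef
  have hgu : Good W Su := hS.inter (H_good hW huv)
  have hgv : Good W Sv := hS.inter (H_good hW huv.symm)
  have hposuv : 0 < W.dist u v := hW.isConnected.pos_dist_of_ne huv.ne
  have hcomm : W.dist v u = W.dist u v := SimpleGraph.dist_comm
  have huSu : u ∈ Su := ⟨hu, by rw [mem_H, SimpleGraph.dist_self]; exact hposuv⟩
  have hvSv : v ∈ Sv := ⟨hv, by rw [mem_H, SimpleGraph.dist_self]; omega⟩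
  have hvnot : v ∉ Su := fun hc => by
    have := hc.2; rw [mem_H, SimpleGraph.dist_self] at this; omega
  have hunot : u ∉ Sv := fun hc => by
    have := hc.2; rw [mem_H, SimpleGraph.dist_self] at this; omega
  have hSucard : Su.ncard < n := by
    have h1 : Su ⊂ S :=
      (Set.ssubset_iff_of_subset Set.inter_subset_left).mpr ⟨v, hv, hvnot⟩
    have := Set.ncard_lt_ncard h1 hfin
    omega
  have hSvcard : Sv.ncard < n := by
    have h1 : Sv ⊂ S :=
      (Set.ssubset_iff_of_subset Set.inter_subset_left).mpr ⟨u, hu, hunot⟩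
    have := Set.ncard_lt_ncard h1 hfin
    omega
  obtain ⟨lu, eu, ⟨hnu, hmu, hcu, hhu, hgu'⟩, hdu⟩ :=
    rooted_aux hW hgu huSu (fun v' hv' hadj => IH Su.ncard hSucard Su le_rfl hgu u v' huSu hv' hadj)
  obtain ⟨lv, ev, ⟨hnv, hmv, hcv, hhv, hgv'⟩, hdv⟩ :=
    rooted_aux hW hgv hvSv (fun v' hv' hadj => IH Sv.ncard hSvcard Sv le_rfl hgv v v' hvSv hv' hadj)
  have hdisj : ∀ x, x ∈ lu → x ∈ lv → False := fun x h1 h2 =>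
    H_disj ((hmu x).mp h1).2 ((hmv x).mp h2).2
  refine ⟨lu ++ lv.reverse, ?_, ?_, ?_, ?_, ?_⟩
  · rw [List.nodup_append]
    exact ⟨hnu, List.nodup_reverse.mpr hnv, fun x h1 y h2 hxy => hdisj x h1 (List.mem_reverse.mp (hxy ▸ h2))⟩
  · intro x
    rw [List.mem_append, List.mem_reverse, hmu, hmv]
    constructor
    · rintro (h | h)
      · exact h.1
      · exact h.1
    · intro hx
      rcases H_cover hW huv x with h | h
      · exact Or.inl ⟨hx, h⟩
      · exact Or.inr ⟨hx, h⟩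
  · show List.IsChain (R W) (lu ++ lv.reverse)
    rw [List.isChain_append]
    refine ⟨hcu, List.isChain_reverse.mpr (hcv.imp fun a b h => R_symm h), ?_⟩
    intro x hx y hy
    rw [hgu'] at hx
    rw [List.head?_reverse, hgv'] at hy
    simp only [Option.mem_def, Option.some_inj] at hx hy
    subst hx; subst hy
    have heuS : eu ∈ Su := (hmu eu).mp (List.mem_of_getLast? hgu')
    have hevS : ev ∈ Sv := (hmv ev).mp (List.mem_of_getLast? hgv')
    constructor
    · rintro rfl; exact H_disj heuS.2 hevS.2
    · have t1 := hW.isConnected.dist_triangle (u := eu) (v := u) (w := ev)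
      have t2 := hW.isConnected.dist_triangle (u := u) (v := v) (w := ev)
      have c1 : W.dist eu u = W.dist u eu := SimpleGraph.dist_comm
      have duv : W.dist u v = 1 := SimpleGraph.dist_eq_one_iff_adj.mpr huv
      omega
  · rw [List.head?_append_of_ne_nil _ (ne_nil_of_head? hhu)]
    exact hhu
  · rw [List.getLast?_append_of_ne_nil _ (fun h => ne_nil_of_head? hhv (List.reverse_eq_nil_iff.mp h))]
    rw [List.getLast?_reverse]
    exact hhv

lemma hamlist_rooted (hW : W.IsTree) [Fintype V] {S : Set V} (hS : Good W S) {u : V} (hu : u ∈ S) :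
    ∃ l e, Spec W S u e l ∧ W.dist u e ≤ 1 :=
  rooted_aux hW hS hu fun v' hv' hadj => hamlist_edge hW S.ncard S le_rfl hS u v' hu hv' hadj

lemma hamlist_components (hW : W.IsTree) [Fintype V] (w : V) :
    ∀ us : List V, us ≠ [] → us.Nodup → (∀ u ∈ us, W.Adj w u) →
    ∃ (l : List V) (u₁ e u' : V), l.Nodup ∧ (∀ x, x ∈ l ↔ ∃ u ∈ us, x ∈ H W u w) ∧
      l.Chain' (R W) ∧ l.head? = some u₁ ∧ u₁ ∈ us ∧ l.getLast? = some e ∧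
      u' ∈ us ∧ W.dist u' e ≤ 1 := by
  intro us
  induction us with
  | nil => simp
  | cons u us ih =>
    intro _ hnd hadj
    have hu : W.Adj w u := hadj u (by simp)
    have hSg : Good W (H W u w) := H_good hW hu.symm
    have huH : u ∈ H W u w := by
      rw [mem_H, SimpleGraph.dist_self]
      exact hW.isConnected.pos_dist_of_ne hu.ne'
    obtain ⟨l₁, e₁, ⟨hn1, hm1, hc1, hh1, hg1⟩, hd1⟩ := hamlist_rooted hW hSg huH
    by_cases hus : us = []
    · subst hus
      refine ⟨l₁, u, e₁, u, hn1, ?_, hc1, hh1, by simp, hg1, by simp, hd1⟩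
      intro x; rw [hm1]; simp
    · obtain ⟨l₂, u₂, e₂, u₂', hn2, hm2, hc2, hh2, hu2, hg2, hu2', hd2⟩ :=
        ih hus (List.Nodup.of_cons hnd) (fun a ha => hadj a (by simp [ha]))
      have hunotin : u ∉ us := (List.nodup_cons.mp hnd).1
      have hdisj : ∀ x, x ∈ l₁ → x ∈ l₂ → False := by
        intro x h1 h2
        obtain ⟨u'', hu'', hx⟩ := (hm2 x).mp h2
        have := component_unique hW hu (hadj u'' (by simp [hu''])) ((hm1 x).mp h1) hx
        exact hunotin (this ▸ hu'')
      refine ⟨l₁ ++ l₂, u, e₂, u₂', ?_, ?_, ?_, ?_, by simp, ?_, by simp [hu2'], hd2⟩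
      · rw [List.nodup_append]
        exact ⟨hn1, hn2, fun x h1 y h2 hxy => hdisj x h1 (hxy ▸ h2)⟩
      · intro x
        rw [List.mem_append, hm1, hm2]
        simp
      · show List.IsChain (R W) (l₁ ++ l₂)
        rw [List.isChain_append]
        refine ⟨hc1, hc2, ?_⟩
        intro x hx y hy
        rw [hg1] at hx
        rw [hh2] at hy
        simp only [Option.mem_def, Option.some_inj] at hx hy
        subst hx; subst hy
        constructor
        · rintro rfl
          exact hdisj e₁ (List.mem_of_getLast? hg1) (mem_of_head? hh2)
        · have t1 := hW.isConnected.dist_triangle (u := e₁) (v := u) (w := u₂)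
          have t2 := hW.isConnected.dist_triangle (u := u) (v := w) (w := u₂)
          have c1 : W.dist e₁ u = W.dist u e₁ := SimpleGraph.dist_comm
          have c2 : W.dist u w = 1 := SimpleGraph.dist_eq_one_iff_adj.mpr hu.symm
          have c3 : W.dist w u₂ = 1 := SimpleGraph.dist_eq_one_iff_adj.mpr (hadj u₂ (by simp [hu2]))
          omega
      · rw [List.head?_append_of_ne_nil _ (ne_nil_of_head? hh1)]
        exact hh1
      · rw [List.getLast?_append_of_ne_nil _ (ne_nil_of_head? hh2)]
        exact hg2

lemma walk_of_chain {α : Type*} (G : SimpleGraph α) :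
    ∀ (l : List α) (a : α), List.Chain G.Adj a l →
      ∃ (b : α) (p : G.Walk a b), p.support = a :: l ∧ (a :: l).getLast? = some b := by
  intro l
  induction l with
  | nil => intro a _; exact ⟨a, Walk.nil, by simp, by simp⟩
  | cons c l ih =>
    intro a hch
    change List.IsChain G.Adj (a :: c :: l) at hch
    rw [List.isChain_cons_cons] at hch
    obtain ⟨b, p, hp, hb⟩ := ih c hch.2
    exact ⟨b, Walk.cons hch.1 p, by simp [hp], by rw [List.getLast?_cons_cons]; exact hb⟩

end TreeCube

theorem stmt_3 {V : Type*} [Fintype V] [DecidableEq V] (W : SimpleGraph V)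
    (hW : W.IsTree) (h2 : 2 ≤ Fintype.card V) (w : V) :
    ∃ (w1 w2 : {v : V // v ≠ w}) (p : ((W.power 3).induce {v : V | v ≠ w}).Walk w1 w2),
      p.IsHamiltonian ∧ W.dist w w1.val = 1 ∧ W.dist w w2.val ≤ 2 := by
  classical
  have hconn := hW.isConnected
  set us := (Finset.univ.filter (fun u => W.Adj w u)).toList with husdef
  have hmemus : ∀ u, u ∈ us ↔ W.Adj w u := by
    intro u; rw [husdef, Finset.mem_toList, Finset.mem_filter]; simp
  have hndus : us.Nodup := Finset.nodup_toList _
  obtain ⟨x₀, hx₀⟩ := Fintype.exists_ne_of_one_lt_card (by omega) w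
  obtain ⟨u₀, hu₀, -⟩ := TreeCube.exists_component hW hx₀
  have husne : us ≠ [] := List.ne_nil_of_mem ((hmemus u₀).mpr hu₀)
  obtain ⟨l, u₁, e, u', hnl, hml, hcl, hhl, hu₁, hgl, hu', hde⟩ :=
    TreeCube.hamlist_components hW w us husne hndus (fun u hu => (hmemus u).mp hu)
  have hlx : ∀ x, x ∈ l ↔ x ≠ w := by
    intro x; rw [hml]
    constructor
    · rintro ⟨u, hu, hx⟩
      rintro rfl
      rw [TreeCube.mem_H, SimpleGraph.dist_self] at hx; omega
    · intro hx
      obtain ⟨u, huadj, hxu⟩ := TreeCube.exists_component hW hx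
      exact ⟨u, (hmemus u).mpr huadj, hxu⟩
  -- lift to the subtype
  set S : Set V := {v : V | v ≠ w} with hSdef
  set G' : SimpleGraph S := (W.power 3).induce S with hG'def
  set L : List S := l.attachWith (· ∈ S) (fun x hx => (hlx x).mp hx) with hLdef
  have hLval : L.map Subtype.val = l := List.attachWith_map_subtype_val _
  have hchain : L.Chain' G'.Adj := by
    have h1 : (L.map Subtype.val).Chain' (TreeCube.R W) := by rw [hLval]; exact hcl
    have h2 := (List.isChain_map Subtype.val).mp h1
    refine h2.imp ?_
    rintro a b ⟨hne, hd⟩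
    exact ⟨hconn.pos_dist_of_ne hne, hd⟩
  obtain ⟨w1, L', hLeq⟩ : ∃ (w1 : S) (L' : List S), L = w1 :: L' := by
    cases hL : L with
    | nil =>
      rw [hL] at hLval
      simp only [List.map_nil] at hLval
      rw [← hLval] at hhl
      simp at hhl
    | cons a t => exact ⟨a, t, rfl⟩
  have hlval' : l = (w1 : V) :: L'.map Subtype.val := by rw [← hLval, hLeq]; simp
  have hw1 : (w1 : V) = u₁ := by rw [hlval'] at hhl; simpa using hhl
  have hchain' : List.Chain G'.Adj w1 L' := by rw [hLeq] at hchain; exact hchain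
  obtain ⟨w2, p, hps, hpl⟩ := TreeCube.walk_of_chain G' L' w1 hchain'
  rw [← hLeq] at hps hpl
  have hw2 : (w2 : V) = e := by
    have hm := List.getLast?_map (f := Subtype.val) (l := L)
    rw [hLval, hgl, hpl] at hm
    simpa using hm.symm
  refine ⟨w1, w2, p, ?_, ?_, ?_⟩
  · intro a
    rw [hps]
    have haL : a ∈ L := by
      have hal : (a : V) ∈ l := (hlx a).mpr a.2
      rw [← hLval, List.mem_map] at hal
      obtain ⟨y, hy, hyv⟩ := hal
      exact (Subtype.ext hyv : y = a) ▸ hy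
    have hndL : L.Nodup := List.Nodup.of_map Subtype.val (by rw [hLval]; exact hnl)
    convert List.count_eq_one_of_mem hndL haL
  · rw [hw1]
    exact SimpleGraph.dist_eq_one_iff_adj.mpr ((hmemus u₁).mp hu₁)
  · rw [hw2]
    have t := hconn.dist_triangle (u := w) (v := u') (w := e)
    have c : W.dist w u' = 1 := SimpleGraph.dist_eq_one_iff_adj.mpr ((hmemus u').mp hu')
    omega
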